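/- If the quantitative parts of all inputs are pairwise distinct (x_i ≠ x_j for all i ≠ j), then the EzGP covariance matrix Φ with entries Φ_{ij} = σ_0^2 exp(-Σ_k θ_k^{(0)}(x_{ik}-x_{jk})^2) + Σ_{h=1}^q Σ_{l=1}^{m_h} 1[z_{ih}=z_{jh}=l] σ_h^2 exp(-Σ_k θ_{k,l}^{(h)}(x_{ik}-x_{jk})^2) is positive definite. -/

import Mathlib

/-!
The covariance matrix is `σ₀²` times a Gaussian kernel matrix plus nonnegative multiples of
matrices `D K D`, with `D` a 0/1 diagonal matrix and `K` a Gaussian kernel matrix, so it suffices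
that Gaussian kernel matrices at distinct points are positive definite. Such a matrix is, up to a
positive constant, the Gram matrix in `L²(ℝᵖ)` of the bumps `t ↦ exp (-∑ k, 2 θₖ (tₖ - xᵢₖ)²)`:
the product of two bumps is `exp (-∑ k, θₖ (xᵢₖ - xⱼₖ)²)` times a bump centred at the midpoint.
The bumps are linearly independent since, up to a common nonvanishing factor and nonzero
constants, they are the distinct characters `t ↦ exp (∑ k, 2 θₖ xᵢₖ tₖ)` of `ℝᵖ` (Dedekind).
-/

/-- The EzGP covariance function between two inputs `(x1, z1)` and `(x2, z2)`. -/
noncomputable def ezgpCov {p q : ℕ} {m : Fin q → ℕ}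
    (σ0sq : ℝ) (σsq : Fin q → ℝ) (θ0 : Fin p → ℝ)
    (θ : (h : Fin q) → Fin p → Fin (m h) → ℝ)
    (x1 x2 : Fin p → ℝ) (z1 z2 : (h : Fin q) → Fin (m h)) : ℝ :=
  σ0sq * Real.exp (-∑ k, θ0 k * (x1 k - x2 k) ^ 2) +
    ∑ h, ∑ l, (if z1 h = l ∧ z2 h = l then (1 : ℝ) else 0) *
      (σsq h * Real.exp (-∑ k, θ h k l * (x1 k - x2 k) ^ 2))

open Real MeasureTheory

section L2

variable {X : Type*} [MeasurableSpace X] {μ : Measure X}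

theorem MeasureTheory.Lp.coeFn_sum_smul_toLp {p : ENNReal} {ι : Type*} {g : ι → X → ℝ}
    (hg : ∀ i, MemLp (g i) p μ) (c : ι → ℝ) (s : Finset ι) :
    ⇑(∑ i ∈ s, c i • (hg i).toLp (g i)) =ᵐ[μ] ∑ i ∈ s, c i • g i := by
  classical
  induction s using Finset.induction_on with
  | empty => simpa using Lp.coeFn_zero ℝ p μ
  | insert j s hj ih =>
    simp only [Finset.sum_insert hj]
    filter_upwards [Lp.coeFn_add (c j • (hg j).toLp (g j)) (∑ i ∈ s, c i • (hg i).toLp (g i)),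
      Lp.coeFn_smul (c j) ((hg j).toLp (g j)), (hg j).coeFn_toLp, ih] with x hadd hsmul htoLp hsum
    rw [hadd, Pi.add_apply, hsmul, Pi.smul_apply, htoLp, hsum, Pi.add_apply, Pi.smul_apply]

theorem linearIndependent_toLp_of_continuous [TopologicalSpace X] [μ.IsOpenPosMeasure]
    {p : ENNReal} {ι : Type*} [Fintype ι] {g : ι → X → ℝ} (hcont : ∀ i, Continuous (g i))
    (hg : ∀ i, MemLp (g i) p μ) (hli : LinearIndependent ℝ g) :
    LinearIndependent ℝ fun i => (hg i).toLp (g i) := by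
  rw [Fintype.linearIndependent_iff] at hli ⊢
  intro c hc
  have hcont_sum : Continuous (∑ i, c i • g i) := by
    simpa only [← Finset.sum_fn] using continuous_finsetSum _ fun i _ => (hcont i).const_smul (c i)
  have hae := Lp.coeFn_sum_smul_toLp hg c Finset.univ
  rw [hc] at hae
  exact hli c ((hcont_sum.ae_eq_iff_eq μ continuous_zero).mp (hae.symm.trans (Lp.coeFn_zero ℝ p μ)))

theorem MeasureTheory.L2.inner_toLp_toLp {f g : X → ℝ} (hf : MemLp f 2 μ) (hg : MemLp g 2 μ) :
    inner ℝ (hf.toLp f) (hg.toLp g) = ∫ x, f x * g x ∂μ := by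
  rw [L2.inner_def]
  refine integral_congr_ae ?_
  filter_upwards [hf.coeFn_toLp, hg.coeFn_toLp] with x hfx hgx
  simp [hfx, hgx, mul_comm]

theorem posDef_integral_mul_of_linearIndependent [TopologicalSpace X] [μ.IsOpenPosMeasure]
    {ι : Type*} [Fintype ι] {g : ι → X → ℝ} (hcont : ∀ i, Continuous (g i))
    (hg : ∀ i, MemLp (g i) 2 μ) (hli : LinearIndependent ℝ g) :
    (Matrix.of fun i j => ∫ x, g i x * g j x ∂μ).PosDef := by
  have hgram : (Matrix.of fun i j => ∫ x, g i x * g j x ∂μ) =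
      Matrix.gram ℝ fun i => (hg i).toLp (g i) := by
    ext i j
    rw [Matrix.gram_apply, L2.inner_toLp_toLp, Matrix.of_apply]
  rw [hgram]
  exact Matrix.posDef_gram_of_linearIndependent (linearIndependent_toLp_of_continuous hcont hg hli)

end L2

theorem linearIndependent_exp_comp_addMonoidHom {E ι : Type*} [AddMonoid E] {φ : ι → E →+ ℝ}
    (hφ : Function.Injective φ) : LinearIndependent ℝ fun i t => exp (φ i t) := by
  let χ : ι → Multiplicative E →* ℝ := fun i => expMonoidHom.comp (φ i).toMultiplicative
  have hχ : Function.Injective χ := fun i j h =>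
    hφ <| AddMonoidHom.ext fun t => exp_injective <| DFunLike.congr_fun h (.ofAdd t)
  exact (linearIndependent_monoidHom (Multiplicative E) ℝ).comp χ hχ

theorem linearIndependent_exp_dotProduct {κ ι : Type*} [Fintype κ] {w : ι → κ → ℝ}
    (hw : Function.Injective w) : LinearIndependent ℝ fun i t => exp (w i ⬝ᵥ t) := by
  classical
  refine linearIndependent_exp_comp_addMonoidHom (φ := fun i => .mk' (w i ⬝ᵥ ·) (dotProduct_add _))
    fun i j h => hw <| funext fun k => ?_
  simpa using DFunLike.congr_fun h (Pi.single k 1)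

section GaussianKernel

variable {κ : Type*} [Fintype κ]

noncomputable def gaussianKernel (θ u v : κ → ℝ) : ℝ :=
  exp (-∑ k, θ k * (u k - v k) ^ 2)

theorem gaussianKernel_sub_right (θ u v : κ → ℝ) :
    gaussianKernel θ u v = gaussianKernel θ (u - v) 0 := by
  simp [gaussianKernel]

theorem continuous_gaussianKernel (θ v : κ → ℝ) : Continuous fun u => gaussianKernel θ u v := by
  unfold gaussianKernel
  fun_prop

theorem gaussianKernel_sq (θ u v : κ → ℝ) :
    gaussianKernel θ u v ^ 2 = gaussianKernel (2 * θ) u v := by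
  rw [gaussianKernel, gaussianKernel, ← exp_nat_mul]
  simp [Finset.mul_sum, mul_assoc]

theorem gaussianKernel_mul_gaussianKernel (θ u v t : κ → ℝ) :
    gaussianKernel (2 * θ) t u * gaussianKernel (2 * θ) t v =
      gaussianKernel θ u v * gaussianKernel (4 * θ) t ((u + v) / 2) := by
  simp only [gaussianKernel, ← exp_add, ← Finset.sum_neg_distrib, ← Finset.sum_add_distrib]
  congr 1
  refine Finset.sum_congr rfl fun k _ => ?_
  simp only [Pi.mul_apply, Pi.add_apply, Pi.div_apply, Pi.ofNat_apply]
  ring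

theorem linearIndependent_gaussianKernel {ι : Type*} [Fintype ι] {θ : κ → ℝ} (hθ : ∀ k, θ k ≠ 0)
    {x : ι → κ → ℝ} (hx : Function.Injective x) :
    LinearIndependent ℝ fun i t => gaussianKernel θ t (x i) := by
  set w : ι → κ → ℝ := fun i => 2 * θ * x i
  have hw : Function.Injective w := fun i j h => hx <| funext fun k =>
    mul_left_cancel₀ (mul_ne_zero two_ne_zero (hθ k)) (congrFun h k)
  have hfactor : ∀ i t, gaussianKernel θ t (x i) =
      exp (-∑ k, θ k * t k ^ 2) * (exp (-∑ k, θ k * x i k ^ 2) * exp (w i ⬝ᵥ t)) := by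
    intro i t
    simp only [gaussianKernel, ← exp_add, dotProduct, w, ← Finset.sum_neg_distrib,
      ← Finset.sum_add_distrib]
    congr 1
    refine Finset.sum_congr rfl fun k _ => ?_
    simp only [Pi.mul_apply, Pi.ofNat_apply]
    ring
  have hexp := linearIndependent_exp_dotProduct hw
  rw [Fintype.linearIndependent_iff] at hexp ⊢
  intro c hc i
  have hcomb : ∑ i, (c i * exp (-∑ k, θ k * x i k ^ 2)) • (fun t => exp (w i ⬝ᵥ t)) = 0 := by
    funext t
    have := congrFun hc t
    simp only [Finset.sum_apply, Pi.smul_apply, smul_eq_mul, hfactor, Pi.zero_apply] at this ⊢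
    rw [← mul_right_inj' (exp_ne_zero (-∑ k, θ k * t k ^ 2)), mul_zero, ← this, Finset.mul_sum]
    exact Finset.sum_congr rfl fun i _ => by ring
  exact (mul_eq_zero.mp (hexp _ hcomb i)).resolve_right (exp_ne_zero _)

variable {θ : κ → ℝ}

theorem integrable_gaussianKernel (hθ : ∀ k, 0 < θ k) (v : κ → ℝ) :
    Integrable fun u => gaussianKernel θ u v := by
  have hprod : Integrable fun u : κ → ℝ => ∏ k, exp (-θ k * u k ^ 2) :=
    Integrable.fintype_prod fun k => integrable_exp_neg_mul_sq (hθ k)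
  have hzero : Integrable fun u => gaussianKernel θ u 0 := by
    refine hprod.congr (.of_forall fun u => ?_)
    simp [gaussianKernel, ← exp_sum]
  simpa [← gaussianKernel_sub_right] using hzero.comp_sub_right v

theorem integral_gaussianKernel_pos (hθ : ∀ k, 0 < θ k) :
    0 < ∫ u, gaussianKernel θ u 0 :=
  integral_exp_pos (integrable_gaussianKernel hθ 0)

theorem memLp_two_gaussianKernel (hθ : ∀ k, 0 < θ k) (v : κ → ℝ) :
    MemLp (fun u => gaussianKernel θ u v) 2 := by
  rw [memLp_two_iff_integrable_sq (continuous_gaussianKernel θ v).aestronglyMeasurable]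
  simpa [gaussianKernel_sq] using integrable_gaussianKernel (θ := 2 * θ) (by simpa using hθ) v

theorem integral_gaussianKernel_mul (u v : κ → ℝ) :
    ∫ t, gaussianKernel (2 * θ) t u * gaussianKernel (2 * θ) t v =
      gaussianKernel θ u v * ∫ t, gaussianKernel (4 * θ) t 0 := by
  simp_rw [gaussianKernel_mul_gaussianKernel, integral_const_mul,
    gaussianKernel_sub_right (4 * θ) _ ((u + v) / 2)]
  rw [integral_sub_right_eq_self (fun t => gaussianKernel (4 * θ) t 0)]

theorem posDef_gaussianKernel {ι : Type*} [Fintype ι] (hθ : ∀ k, 0 < θ k) {x : ι → κ → ℝ}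
    (hx : Function.Injective x) : (Matrix.of fun i j => gaussianKernel θ (x i) (x j)).PosDef := by
  have hθ2 : ∀ k, 0 < (2 * θ) k := by simpa using hθ
  have hC := integral_gaussianKernel_pos (θ := 4 * θ) (by simpa using hθ)
  have hgram : (Matrix.of fun i j => gaussianKernel θ (x i) (x j)) =
      (∫ t, gaussianKernel (4 * θ) t 0)⁻¹ • Matrix.of fun i j =>
        ∫ t, gaussianKernel (2 * θ) t (x i) * gaussianKernel (2 * θ) t (x j) := by
    ext i j
    rw [Matrix.smul_apply, Matrix.of_apply, Matrix.of_apply, integral_gaussianKernel_mul,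
      smul_eq_mul, mul_left_comm, inv_mul_cancel₀ hC.ne', mul_one]
  rw [hgram]
  refine .smul (posDef_integral_mul_of_linearIndependent (fun i => continuous_gaussianKernel _ _)
    (fun i => memLp_two_gaussianKernel hθ2 _) ?_) (inv_pos.mpr hC)
  exact linearIndependent_gaussianKernel (fun k => (hθ2 k).ne') hx

end GaussianKernel

theorem Matrix.PosSemidef.ite_and_mul {n R : Type*} [Fintype n] [Ring R] [PartialOrder R]
    [StarRing R] {A : Matrix n n R} (hA : A.PosSemidef) (P : n → Prop) [DecidablePred P] :
    (Matrix.of fun i j => (if P i ∧ P j then 1 else 0) * A i j).PosSemidef := by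
  classical
  let D : Matrix n n R := Matrix.diagonal fun i => if P i then 1 else 0
  have hD : D * A * D.conjTranspose =
      Matrix.of fun i j => (if P i ∧ P j then 1 else 0) * A i j := by
    ext i j
    by_cases hi : P i <;> by_cases hj : P j <;> simp [D, Matrix.diagonal_conjTranspose, hi, hj]
  exact hD ▸ hA.mul_mul_conjTranspose_same D

theorem ezgp_cov_posDef_of_distinct {n p q : ℕ} {m : Fin q → ℕ}
    (x : Fin n → Fin p → ℝ) (z : Fin n → (h : Fin q) → Fin (m h))
    (hx : ∀ i j : Fin n, i ≠ j → x i ≠ x j)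
    (σ0sq : ℝ) (σsq : Fin q → ℝ) (θ0 : Fin p → ℝ)
    (θ : (h : Fin q) → Fin p → Fin (m h) → ℝ)
    (hσ0 : 0 < σ0sq) (hσ : ∀ h, 0 < σsq h)
    (hθ0 : ∀ k, 0 < θ0 k) (hθ : ∀ h k l, 0 < θ h k l) :
    (Matrix.of fun i j : Fin n =>
      ezgpCov σ0sq σsq θ0 θ (x i) (x j) (z i) (z j)).PosDef := by
  have hxinj : Function.Injective x := fun i j hij => by_contra fun hne => hx i j hne hij
  have hsplit : (Matrix.of fun i j => ezgpCov σ0sq σsq θ0 θ (x i) (x j) (z i) (z j)) =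
      σ0sq • Matrix.of (fun i j => gaussianKernel θ0 (x i) (x j)) +
        ∑ h, ∑ l, σsq h • Matrix.of fun i j =>
          (if z i h = l ∧ z j h = l then 1 else 0) * gaussianKernel (θ h · l) (x i) (x j) := by
    ext i j
    simp [ezgpCov, gaussianKernel, Matrix.sum_apply, mul_left_comm]
  rw [hsplit]
  refine ((posDef_gaussianKernel hθ0 hxinj).smul hσ0).add_posSemidef
    (Matrix.posSemidef_sum _ fun h _ => Matrix.posSemidef_sum _ fun l _ => ?_)
  exact ((posDef_gaussianKernel (hθ h · l) hxinj).posSemidef.ite_and_mul _).smul (hσ h).le
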